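/- ζ(5) = π⁴ · ∫₀^∞ s^{−5} ( coth(s) − 1/s − s/3 + s³/45 ) ds, where the integral is over real s ∈ (0,∞). -/

import Mathlib

/-!
Put `x = i s / π` in the Mittag-Leffler expansion of `π cot (π x)`: since `cot (i s) = -i coth s`,
it becomes `coth s - 1/s = ∑ₙ 2s / (s² + c²)` with `c = nπ`. Euler's values `ζ(2) = π²/6` and
`ζ(4) = π⁴/90` expand `s/3` and `s³/45` over the same index, and after subtraction the `n`-th term
times `s⁻⁵` is the positive function `2 / (c⁴ (s² + c²))`, whose integral over `(0, ∞)` is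
`π / c⁵ = 1 / (n⁵ π⁴)`. Positivity lets the sum and the integral be interchanged.
-/

open Real MeasureTheory

noncomputable def coth (s : ℝ) : ℝ := Real.cosh s / Real.sinh s

theorem hasSum_one_div_nat_add_one_pow {k : ℕ} (hk : k ≠ 0) {a : ℝ}
    (h : HasSum (fun n : ℕ => 1 / (n : ℝ) ^ k) a) :
    HasSum (fun n : ℕ => 1 / ((n : ℝ) + 1) ^ k) a := by
  simpa [hk] using (hasSum_nat_add_iff' 1).mpr h

theorem riemannZeta_natCast_eq_tsum {k : ℕ} (hk : 1 < k) :
    riemannZeta k = ((∑' n : ℕ, 1 / ((n : ℝ) + 1) ^ k : ℝ) : ℂ) := by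
  rw [zeta_eq_tsum_one_div_nat_add_one_cpow (by simpa using hk), Complex.ofReal_tsum]
  refine tsum_congr fun n => ?_
  push_cast
  rw [Complex.cpow_natCast]

theorem integrable_inv_sq_add_sq {c : ℝ} (hc : c ≠ 0) :
    Integrable fun s : ℝ => (s ^ 2 + c ^ 2)⁻¹ := by
  have h := (integrable_inv_one_add_sq.comp_mul_left' (inv_ne_zero hc)).const_mul (c⁻¹ ^ 2)
  refine h.congr (Filter.Eventually.of_forall fun s => ?_)
  field_simp
  ring

theorem integral_Ioi_zero_inv_sq_add_sq {c : ℝ} (hc : 0 < c) :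
    ∫ s in Set.Ioi 0, (s ^ 2 + c ^ 2)⁻¹ = π / (2 * c) := by
  have hscale := integral_comp_mul_left_Ioi (fun x : ℝ => (1 + x ^ 2)⁻¹) 0 (inv_pos.mpr hc)
  simp only [mul_zero, integral_Ioi_inv_one_add_sq, arctan_zero, sub_zero, inv_inv,
    smul_eq_mul] at hscale
  have hfun : (fun s : ℝ => (s ^ 2 + c ^ 2)⁻¹) = fun s => c⁻¹ ^ 2 * (1 + (c⁻¹ * s) ^ 2)⁻¹ := by
    funext s
    field_simp
    ring
  rw [hfun, integral_const_mul, hscale]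
  field_simp

theorem integrable_two_div_pow_four_mul {c : ℝ} (hc : c ≠ 0) :
    Integrable fun s : ℝ => 2 / (c ^ 4 * (s ^ 2 + c ^ 2)) := by
  simpa only [div_mul_eq_div_div, div_eq_mul_inv (2 / c ^ 4)] using
    (integrable_inv_sq_add_sq hc).const_mul (2 / c ^ 4)

theorem integral_Ioi_zero_two_div_pow_four_mul {c : ℝ} (hc : 0 < c) :
    ∫ s in Set.Ioi 0, 2 / (c ^ 4 * (s ^ 2 + c ^ 2)) = π / c ^ 5 := by
  simp_rw [div_mul_eq_div_div, div_eq_mul_inv (2 / c ^ 4)]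
  rw [integral_const_mul, integral_Ioi_zero_inv_sq_add_sq hc]
  field_simp

open Complex in
theorem hasSum_coth_sub_one_div {s : ℝ} (hs : s ≠ 0) :
    HasSum (fun n : ℕ => 2 * s / (s ^ 2 + ((n + 1) * π) ^ 2)) (coth s - 1 / s) := by
  have hπ : (π : ℂ) ≠ 0 := ofReal_ne_zero.mpr pi_ne_zero
  set x : ℂ := s / π * I
  have hx : x ∈ integerComplement := by
    rintro ⟨k, hk⟩
    have him := congrArg Complex.im hk
    simp only [intCast_im, x, mul_I_im, ← ofReal_div, ofReal_re] at him
    exact div_ne_zero hs pi_ne_zero him.symm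
  have hterm (n : ℕ) :
      cotTerm x n = -(π * I) * ((2 * s / (s ^ 2 + ((n + 1) * π) ^ 2) : ℝ) : ℂ) := by
    have hden : ((s : ℂ) * I + π * (n + 1)) * (s * I - π * (n + 1))
        = -(s ^ 2 + π ^ 2 * (n + 1) ^ 2) := by
      linear_combination (s : ℂ) ^ 2 * I_sq
    rw [cotTerm_identity hx]
    simp only [x]
    push_cast
    field_simp
    rw [hden, div_neg]
  have hval : π * cot (π * x) - 1 / x = -(π * I) * ((coth s - 1 / s : ℝ) : ℂ) := by
    have hsinh : Complex.sinh s ≠ 0 := by exact_mod_cast (Real.sinh_ne_zero.mpr hs)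
    have hπx : (π : ℂ) * x = s * I := by
      simp only [x]
      field_simp
    rw [hπx, Complex.cot_eq_cos_div_sin, cos_mul_I, sin_mul_I, coth]
    simp only [x]
    push_cast
    field_simp
    rw [I_sq]
    ring
  rw [← Complex.hasSum_ofReal, ← hasSum_mul_left_iff (neg_ne_zero.mpr (mul_ne_zero hπ I_ne_zero))]
  rw [← hval, cot_series_rep' hx]
  simpa only [hterm] using (summable_cotTerm hx).hasSum

theorem hasSum_pow_neg_five_mul_coth {s : ℝ} (hs : s ≠ 0) :
    HasSum (fun n : ℕ => 2 / (((n + 1) * π) ^ 4 * (s ^ 2 + ((n + 1) * π) ^ 2)))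
      (s ^ (-5 : ℤ) * (coth s - 1 / s - s / 3 + s ^ 3 / 45)) := by
  have hzeta2 : HasSum (fun n : ℕ => 2 * s / ((n + 1) * π) ^ 2) (s / 3) := by
    have h := (hasSum_one_div_nat_add_one_pow two_ne_zero hasSum_zeta_two).mul_left (2 * s / π ^ 2)
    rw [show 2 * s / π ^ 2 * (π ^ 2 / 6) = s / 3 by field_simp; ring] at h
    exact h.congr_fun fun n => by field_simp
  have hzeta4 : HasSum (fun n : ℕ => 2 * s ^ 3 / ((n + 1) * π) ^ 4) (s ^ 3 / 45) := by
    have h := (hasSum_one_div_nat_add_one_pow four_ne_zero hasSum_zeta_four).mul_left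
      (2 * s ^ 3 / π ^ 4)
    rw [show 2 * s ^ 3 / π ^ 4 * (π ^ 4 / 90) = s ^ 3 / 45 by field_simp; ring] at h
    exact h.congr_fun fun n => by field_simp
  refine (((hasSum_coth_sub_one_div hs).sub hzeta2).add hzeta4).mul_left (s ^ (-5 : ℤ)) |>.congr_fun ?_
  intro n
  have hc : ((n : ℝ) + 1) * π ≠ 0 := by positivity
  rw [zpow_neg, zpow_ofNat]
  field_simp
  ring

theorem integral_pow_neg_five_mul_coth :
    ∫ s in Set.Ioi (0 : ℝ), s ^ (-5 : ℤ) * (coth s - 1 / s - s / 3 + s ^ 3 / 45)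
      = (∑' n : ℕ, 1 / ((n : ℝ) + 1) ^ 5) / π ^ 4 := by
  set F : ℕ → ℝ → ℝ := fun n s => 2 / (((n + 1) * π) ^ 4 * (s ^ 2 + ((n + 1) * π) ^ 2))
  have hc (n : ℕ) : 0 < ((n : ℝ) + 1) * π := by positivity
  have hF_integral (n : ℕ) : ∫ s in Set.Ioi 0, F n s = π / ((n + 1) * π) ^ 5 :=
    integral_Ioi_zero_two_div_pow_four_mul (hc n)
  have hF_sum : Summable fun n => ∫ s in Set.Ioi 0, ‖F n s‖ := by
    have hnorm (n : ℕ) : ∫ s in Set.Ioi 0, ‖F n s‖ = (π ^ 4)⁻¹ * (1 / ((n : ℝ) + 1) ^ 5) := by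
      have hF_nonneg (s : ℝ) : 0 ≤ F n s := by positivity
      simp_rw [Real.norm_of_nonneg (hF_nonneg _), hF_integral]
      field_simp
    simp_rw [hnorm]
    refine Summable.mul_left _ ?_
    exact_mod_cast (summable_nat_add_iff 1).mpr (summable_one_div_nat_pow.mpr (by norm_num))
  have hswap := hasSum_integral_of_summable_integral_norm
    (fun n => (integrable_two_div_pow_four_mul (hc n).ne').integrableOn) hF_sum
  rw [setIntegral_congr_fun measurableSet_Ioi
    fun s hs => (hasSum_pow_neg_five_mul_coth (ne_of_gt hs)).tsum_eq.symm,
    ← hswap.tsum_eq, ← tsum_div_const]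
  refine tsum_congr fun n => ?_
  rw [hF_integral]
  field_simp

/-- `ζ(5) = π⁴ ∫₀^∞ s^{-5}(coth s − 1/s − s/3 + s³/45) ds`. -/
theorem zeta_five_integral_coth :
    riemannZeta 5 = (Real.pi : ℂ) ^ 4 *
      ((∫ s in Set.Ioi (0 : ℝ), s ^ (-5 : ℤ) * (coth s - 1 / s - s / 3 + s ^ 3 / 45) : ℝ) : ℂ) := by
  rw [integral_pow_neg_five_mul_coth, ← Nat.cast_ofNat, riemannZeta_natCast_eq_tsum (by norm_num)]
  push_cast
  field_simp
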